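/- arXiv:1510.05176 — 4 statements merged into one kernel-verified Lean document; each statement's English description precedes it below -/
import Mathlib

section
/- Let L be a symmetric positive semidefinite N×N matrix whose kernel is exactly the span of the all-ones vector 𝟙 (the Laplacian of a connected graph). Let h₁, …, h_N ∈ ℝ^m be such that the matrix H with rows hᵢᵀ has rank m, and let J = diag(h₁h₁ᵀ, …, h_N h_Nᵀ) be the block-diagonal Nm × Nm matrix. Then for every K > 0, the matrix K (L ⊗ I_m) + J is positive definite. -/
open Matrix Finset

theorem stmt10 {N m : ℕ} (L : Matrix (Fin N) (Fin N) ℝ) (hsymm : L.IsSymm)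
    (hpsd : L.PosSemidef)
    (hker : ∀ x : Fin N → ℝ, L *ᵥ x = 0 ↔ ∃ c : ℝ, x = fun _ => c)
    (h : Fin N → Fin m → ℝ) (hrank : (Matrix.of h).rank = m)
    (J : Matrix (Fin N × Fin m) (Fin N × Fin m) ℝ)
    (hJ : ∀ p q, J p q = if p.1 = q.1 then h p.1 p.2 * h p.1 q.2 else 0)
    (K : ℝ) (hK : 0 < K) :
    (K • (Matrix.kroneckerMap (· * ·) L (1 : Matrix (Fin m) (Fin m) ℝ)) + J).PosDef := by
  set A := Matrix.kroneckerMap (· * ·) L (1 : Matrix (Fin m) (Fin m) ℝ) with hA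
  -- quadratic form of A
  have qA : ∀ x : Fin N × Fin m → ℝ,
      x ⬝ᵥ A *ᵥ x = ∑ j : Fin m, (fun i => x (i, j)) ⬝ᵥ L *ᵥ (fun i => x (i, j)) := by
    intro x
    simp only [dotProduct, mulVec, hA, kroneckerMap_apply, one_apply]
    rw [Fintype.sum_prod_type]
    rw [Finset.sum_comm]
    congr 1; ext j
    congr 1; ext i
    congr 1
    rw [Fintype.sum_prod_type]
    refine Finset.sum_congr rfl fun k _ => ?_
    rw [Finset.sum_eq_single j]
    · simp [mul_comm]
    · intro l _ hl; simp [Ne.symm hl]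
    · simp
  -- quadratic form of J
  have qJ : ∀ x : Fin N × Fin m → ℝ,
      x ⬝ᵥ J *ᵥ x = ∑ i : Fin N, (∑ j : Fin m, h i j * x (i, j)) ^ 2 := by
    intro x
    simp only [dotProduct, mulVec]
    rw [Fintype.sum_prod_type]
    congr 1; ext i
    have : ∀ j : Fin m, (∑ q : Fin N × Fin m, J (i, j) q * x q)
        = h i j * ∑ l : Fin m, h i l * x (i, l) := by
      intro j
      rw [Finset.mul_sum, Fintype.sum_prod_type]
      rw [Finset.sum_eq_single i]
      · congr 1; ext l; rw [hJ]; simp; ring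
      · intro k _ hk
        apply Finset.sum_eq_zero; intro l _
        rw [hJ]; simp [Ne.symm hk]
      · simp
    calc ∑ j, x (i, j) * (∑ q, J (i, j) q * x q)
        = ∑ j, x (i, j) * (h i j * ∑ l, h i l * x (i, l)) := by
          congr 1; ext j; rw [this]
      _ = (∑ j, h i j * x (i, j)) * (∑ l, h i l * x (i, l)) := by
          rw [Finset.sum_mul]; congr 1; ext j; ring
      _ = (∑ j, h i j * x (i, j)) ^ 2 := by ring
  refine posDef_iff_dotProduct_mulVec.mpr ⟨?_, ?_⟩
  · -- Hermitian
    ext p q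
    simp only [conjTranspose_apply, Matrix.add_apply, Matrix.smul_apply, smul_eq_mul, star_trivial,
      hA, kroneckerMap_apply, one_apply]
    have hL : L q.1 p.1 = L p.1 q.1 := by
      have := hsymm; rw [Matrix.IsSymm] at this
      exact congrFun (congrFun this p.1) q.1
    have hJs : J q p = J p q := by
      rw [hJ, hJ]
      by_cases hpq : p.1 = q.1
      · simp [hpq, mul_comm]
      · rw [if_neg hpq, if_neg fun hh => hpq hh.symm]
    rw [hL, hJs]
    by_cases hh : p.2 = q.2 <;> simp [hh, eq_comm]
  · intro x hx
    simp only [star_trivial, add_mulVec, dotProduct_add, smul_mulVec, dotProduct_smul,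
      smul_eq_mul]
    have hAnn : 0 ≤ x ⬝ᵥ A *ᵥ x := by
      rw [qA]; exact Finset.sum_nonneg fun j _ => by simpa using hpsd.dotProduct_mulVec_nonneg (fun i => x (i, j))
    have hJnn : 0 ≤ x ⬝ᵥ J *ᵥ x := by
      rw [qJ]; exact Finset.sum_nonneg fun i _ => sq_nonneg _
    rcases lt_or_eq_of_le hAnn with hApos | hAzero
    · have : 0 ≤ x ⬝ᵥ J *ᵥ x := hJnn
      nlinarith
    rcases lt_or_eq_of_le hJnn with hJpos | hJzero
    · nlinarith
    exfalso
    -- A-form zero ⇒ each column constant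
    have hcols : ∀ j : Fin m, ∃ c : ℝ, (fun i => x (i, j)) = fun _ => c := by
      intro j
      apply (hker _).mp
      apply (hpsd.dotProduct_mulVec_zero_iff _).mp
      have hsum : ∑ j : Fin m, (fun i => x (i, j)) ⬝ᵥ L *ᵥ (fun i => x (i, j)) = 0 := by
        rw [← qA]; exact hAzero.symm
      have := (Finset.sum_eq_zero_iff_of_nonneg (fun j _ => by simpa using hpsd.dotProduct_mulVec_nonneg (fun i => x (i, j)))).mp hsum j (Finset.mem_univ j)
      simpa using this
    choose c hc using hcols
    -- J-form zero ⇒ h i ⬝ c = 0 for all i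
    have hhc : ∀ i : Fin N, ∑ j : Fin m, h i j * c j = 0 := by
      intro i
      have hsum : ∑ i : Fin N, (∑ j : Fin m, h i j * x (i, j)) ^ 2 = 0 := by
        rw [← qJ]; exact hJzero.symm
      have := (Finset.sum_eq_zero_iff_of_nonneg (fun i _ => sq_nonneg _)).mp hsum i
        (Finset.mem_univ i)
      have h2 : ∑ j : Fin m, h i j * x (i, j) = 0 := by
        exact pow_eq_zero_iff (n := 2) (by norm_num) |>.mp this
      rw [← h2]
      congr 1; ext j
      have := congrFun (hc j) i
      rw [this]
    -- injectivity from rank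
    have hmul : (Matrix.of h) *ᵥ c = 0 := by
      ext i; simpa [mulVec, dotProduct] using hhc i
    have hker0 : LinearMap.ker (Matrix.of h).mulVecLin = ⊥ := by
      have hrn := LinearMap.finrank_range_add_finrank_ker (Matrix.of h).mulVecLin
      rw [Matrix.rank] at hrank
      rw [hrank] at hrn
      simp only [Module.finrank_pi, Fintype.card_fin] at hrn
      have : Module.finrank ℝ (LinearMap.ker (Matrix.of h).mulVecLin) = 0 := by omega
      exact Submodule.finrank_eq_zero.mp this
    have hc0 : c = 0 := by
      have : c ∈ LinearMap.ker (Matrix.of h).mulVecLin := by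
        simpa [Matrix.mulVecLin_apply] using hmul
      rw [hker0] at this; simpa using this
    apply hx
    ext p
    have := congrFun (hc p.2) p.1
    simp [this, hc0]
end

section
/- Let A₁, …, A_N be affine hyperplanes in ℝ^m, Aᵢ = {y : hᵢᵀy = zᵢ} with ‖hᵢ‖ = 1, whose intersection A = ∩ᵢ Aᵢ is nonempty, and let y♯ ∈ A. Consider the ODE system ẋᵢ = K Σ_{j∈Nᵢ(t)} a_{ij}(t)(x_j − xᵢ) + P_{Aᵢ}(xᵢ) − xᵢ, with K > 0 and nonnegative weights a_{ij}(t). Then for any solution x(t), the function f(t) = maxᵢ ½‖xᵢ(t) − y♯‖² is nonincreasing in t; in particular any product of balls ∏ᵢ {w : ‖w − y♯‖ ≤ r} is positively invariant. -/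
open Filter Finset Set
open scoped Topology

theorem stmt12 {m N : ℕ} (h : Fin N → EuclideanSpace ℝ (Fin m)) (hh : ∀ i, ‖h i‖ = 1)
    (z : Fin N → ℝ) (ys : EuclideanSpace ℝ (Fin m))
    (hys : ∀ i, (inner ℝ (h i) ys : ℝ) = z i)
    (K : ℝ) (hK : 0 < K)
    (a : Fin N → Fin N → ℝ → ℝ) (ha : ∀ i j t, 0 ≤ a i j t)
    (x : ℝ → Fin N → EuclideanSpace ℝ (Fin m))
    (hx : ∀ i, ∀ t ≥ (0 : ℝ), HasDerivAt (fun s => x s i)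
      (K • (∑ j, a i j t • (x t j - x t i))
        - ((inner ℝ (h i) (x t i) : ℝ) - z i) • h i) t) :
    (∀ s t : ℝ, 0 ≤ s → s ≤ t →
      (⨆ i, (1 / 2) * ‖x t i - ys‖ ^ 2) ≤ ⨆ i, (1 / 2) * ‖x s i - ys‖ ^ 2) ∧
    (∀ r : ℝ, (∀ i, ‖x 0 i - ys‖ ≤ r) → ∀ t ≥ (0 : ℝ), ∀ i, ‖x t i - ys‖ ≤ r) := by
  classical
  set g : Fin N → ℝ → ℝ := fun i t => (1 / 2) * ‖x t i - ys‖ ^ 2 with hgdef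
  set v : Fin N → ℝ → EuclideanSpace ℝ (Fin m) := fun i t =>
    K • (∑ j, a i j t • (x t j - x t i)) - ((inner ℝ (h i) (x t i) : ℝ) - z i) • h i with hvdef
  -- derivative of the Lyapunov functions
  have hgd : ∀ i t, (0:ℝ) ≤ t → HasDerivAt (g i) ((inner ℝ (x t i - ys) (v i t) : ℝ)) t := by
    intro i t ht
    have h1 : HasDerivAt (fun s => x s i - ys) (v i t) t := (hx i t ht).sub_const ys
    have h2 := (HasDerivAt.inner (𝕜 := ℝ) h1 h1).const_mul (1/2 : ℝ)
    have hfun : g i = fun s => (1/2 : ℝ) * (inner ℝ (x s i - ys) (x s i - ys) : ℝ) := by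
      funext s
      rw [hgdef]
      rw [real_inner_self_eq_norm_sq]
    rw [hfun]
    refine h2.congr_deriv ?_
    rw [real_inner_comm (v i t) (x t i - ys)]
    ring
  -- dissipativity at a maximizer
  have hdis : ∀ t, ∀ i : Fin N, (∀ j, ‖x t j - ys‖ ≤ ‖x t i - ys‖) →
      (inner ℝ (x t i - ys) (v i t) : ℝ) ≤ 0 := by
    intro t i hmax
    have hc : (inner ℝ (x t i - ys) (h i) : ℝ) = (inner ℝ (h i) (x t i) : ℝ) - z i := by
      rw [inner_sub_left, ← hys i, real_inner_comm (x t i) (h i), real_inner_comm ys (h i)]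
    rw [hvdef]
    simp only [inner_sub_right, real_inner_smul_right, inner_sum]
    have hsum : (∑ j, a i j t * ((inner ℝ (x t i - ys) (x t j) : ℝ) - (inner ℝ (x t i - ys) (x t i) : ℝ))) ≤ 0 := by
      apply Finset.sum_nonpos
      intro j _
      apply mul_nonpos_of_nonneg_of_nonpos (ha i j t)
      have he : (inner ℝ (x t i - ys) (x t j) : ℝ) - (inner ℝ (x t i - ys) (x t i) : ℝ)
          = (inner ℝ (x t i - ys) (x t j - ys) : ℝ) - ‖x t i - ys‖^2 := by
        rw [inner_sub_right, ← real_inner_self_eq_norm_sq, inner_sub_right]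
        ring
      rw [he]
      have h1 : (inner ℝ (x t i - ys) (x t j - ys) : ℝ) ≤ ‖x t i - ys‖ * ‖x t j - ys‖ :=
        real_inner_le_norm _ _
      nlinarith [hmax j, norm_nonneg (x t i - ys)]
    have hK1 : K * (∑ j, a i j t * ((inner ℝ (x t i - ys) (x t j) : ℝ) - (inner ℝ (x t i - ys) (x t i) : ℝ))) ≤ 0 :=
      mul_nonpos_of_nonneg_of_nonpos hK.le hsum
    have hsq : 0 ≤ ((inner ℝ (h i) (x t i) : ℝ) - z i) * (inner ℝ (x t i - ys) (h i) : ℝ) := by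
      rw [hc]; exact mul_self_nonneg _
    linarith
  rcases isEmpty_or_nonempty (Fin N) with hE | hNE
  · constructor
    · intro s t hs hst
      rw [Real.iSup_of_isEmpty, Real.iSup_of_isEmpty]
    · intro r _ t _ i
      exact (hE.false i).elim
  · have hne : (univ : Finset (Fin N)).Nonempty := univ_nonempty
    set φ : ℝ → ℝ := fun t => univ.sup' hne (fun i => g i t) with hφdef
    have hφ_eq : ∀ t, φ t = ⨆ i, g i t := fun t => Finset.sup'_univ_eq_ciSup _
    have key : ∀ s t : ℝ, 0 ≤ s → s ≤ t → φ t ≤ φ s := by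
      intro s t hs hst
      have hmem : t ∈ Icc s t := ⟨hst, le_refl t⟩
      refine image_le_of_liminf_slope_right_le_deriv_boundary (f := φ)
        (B := fun _ => φ s) (B' := fun _ => 0) ?_ (le_refl _) continuousOn_const
        (fun u _ => hasDerivWithinAt_const u _ _) ?_ hmem
      · -- continuity of φ
        intro zz hz
        have hz0 : (0:ℝ) ≤ zz := hs.trans hz.1
        exact (ContinuousAt.finset_sup'_apply hne
          (fun i _ => (hgd i zz hz0).continuousAt)).continuousWithinAt
      · -- slope bound
        intro t₀ ht₀ r hr
        have ht₀0 : (0:ℝ) ≤ t₀ := hs.trans ht₀.1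
        obtain ⟨i₀, -, hi₀⟩ := Finset.exists_max_image univ (fun i => g i t₀) hne
        have hφt₀ : φ t₀ = g i₀ t₀ := by
          simp only [hφdef]
          exact le_antisymm (Finset.sup'_le _ _ fun j _ => hi₀ j (mem_univ j))
            (Finset.le_sup' (fun i => g i t₀) (mem_univ i₀))
        have hev : ∀ j : Fin N, ∀ᶠ zz in 𝓝[>] t₀, g j zz < g i₀ t₀ + r * (zz - t₀) := by
          intro j
          rcases lt_or_eq_of_le (hi₀ j (mem_univ j)) with hj | hj
          · have hc : ContinuousAt (g j) t₀ := (hgd j t₀ ht₀0).continuousAt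
            have h1 : ∀ᶠ zz in 𝓝 t₀, g j zz < g i₀ t₀ := hc.tendsto.eventually_lt_const hj
            filter_upwards [h1.filter_mono nhdsWithin_le_nhds, self_mem_nhdsWithin]
              with zz h2 h3
            have h4 : 0 < r * (zz - t₀) := mul_pos hr (sub_pos.2 h3)
            linarith
          · -- j is also a maximizer
            have hmax : ∀ k, ‖x t₀ k - ys‖ ≤ ‖x t₀ j - ys‖ := by
              intro k
              have h1 : g k t₀ ≤ g j t₀ := by rw [hj]; exact hi₀ k (mem_univ k)
              have h2 := norm_nonneg (x t₀ k - ys)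
              have h3 := norm_nonneg (x t₀ j - ys)
              simp only [hgdef] at h1
              nlinarith
            have hd := hgd j t₀ ht₀0
            have hd0 := hdis t₀ j hmax
            have hslope := hasDerivAt_iff_tendsto_slope.1 hd
            have hslope' : Tendsto (slope (g j) t₀) (𝓝[>] t₀)
                (𝓝 ((inner ℝ (x t₀ j - ys) (v j t₀) : ℝ))) :=
              hslope.mono_left (nhdsWithin_mono _ fun zz hz => Set.mem_compl_singleton_iff.2 (ne_of_gt hz))
            have h2 : ∀ᶠ zz in 𝓝[>] t₀, slope (g j) t₀ zz < r :=
              hslope'.eventually_lt_const (lt_of_le_of_lt hd0 hr)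
            filter_upwards [h2, self_mem_nhdsWithin] with zz h3 h4
            rw [slope_def_field, div_lt_iff₀ (sub_pos.2 h4)] at h3
            have h5 : g j t₀ = g i₀ t₀ := hj
            linarith
        have hall := Filter.eventually_all.2 hev
        refine ((hall.and self_mem_nhdsWithin).mono ?_).frequently
        rintro zz ⟨h1, h2⟩
        have h5 : 0 < zz - t₀ := sub_pos.2 h2
        have h6 : φ zz < φ t₀ + r * (zz - t₀) := by
          rw [hφt₀]
          exact (Finset.sup'_lt_iff hne).2 fun j _ => h1 j
        rw [slope_def_field, div_lt_iff₀ h5]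
        linarith
    have hbdd : ∀ t : ℝ, BddAbove (Set.range fun i => g i t) :=
      fun t => (Set.finite_range _).bddAbove
    constructor
    · intro s t hs hst
      have hkey := key s t hs hst
      rw [hφ_eq, hφ_eq] at hkey
      exact hkey
    · intro r hr t ht i
      have hrnn : 0 ≤ r := (norm_nonneg _).trans (hr i)
      have h1 : g i t ≤ ⨆ j, g j t := le_ciSup (hbdd t) i
      have h2 := key 0 t le_rfl ht
      rw [hφ_eq, hφ_eq] at h2
      have h3 : (⨆ j, g j 0) ≤ (1/2) * r^2 := by
        apply ciSup_le
        intro j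
        have h4 := hr j
        have h5 := norm_nonneg (x 0 j - ys)
        simp only [hgdef]
        nlinarith
      have h4 : g i t ≤ (1/2) * r^2 := h1.trans (h2.trans h3)
      have h5 := norm_nonneg (x t i - ys)
      simp only [hgdef] at h4
      nlinarith
end

section
/- Let Aᵢ = {y : hᵢᵀy = zᵢ} be affine hyperplanes in ℝ^m with unit normals hᵢ, and suppose A = ∩ᵢ Aᵢ contains a point y♯. Consider the system ẋᵢ = Σ_{j∈Nᵢ(t)} a_{ij}(t)(P_{Aᵢ}(x_j) − P_{Aᵢ}(xᵢ)) with xᵢ(0) ∈ Aᵢ for all i. Then xᵢ(t) ∈ Aᵢ for all t ≥ 0, and the function f(t) = maxᵢ ½‖xᵢ(t) − y♯‖² is nonincreasing along solutions. -/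
open Filter Set Finset Topology

theorem stmt14 {m N : ℕ} (h : Fin N → EuclideanSpace ℝ (Fin m)) (hh : ∀ i, ‖h i‖ = 1)
    (z : Fin N → ℝ) (ys : EuclideanSpace ℝ (Fin m))
    (hys : ∀ i, (inner ℝ (h i) ys : ℝ) = z i)
    (a : Fin N → Fin N → ℝ → ℝ) (ha : ∀ i j t, 0 ≤ a i j t)
    (P : Fin N → EuclideanSpace ℝ (Fin m) → EuclideanSpace ℝ (Fin m))
    (hPdef : ∀ i v, P i v = v - ((inner ℝ (h i) v : ℝ) - z i) • h i)
    (x : ℝ → Fin N → EuclideanSpace ℝ (Fin m))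
    (hx0 : ∀ i, (inner ℝ (h i) (x 0 i) : ℝ) = z i)
    (hx : ∀ i, ∀ t ≥ (0 : ℝ), HasDerivAt (fun s => x s i)
      (∑ j, a i j t • (P i (x t j) - P i (x t i))) t) :
    (∀ t ≥ (0 : ℝ), ∀ i, (inner ℝ (h i) (x t i) : ℝ) = z i) ∧
    (∀ s t : ℝ, 0 ≤ s → s ≤ t →
      (⨆ i, (1 / 2) * ‖x t i - ys‖ ^ 2) ≤ ⨆ i, (1 / 2) * ‖x s i - ys‖ ^ 2) := by
  have hhself : ∀ i, (inner ℝ (h i) (h i) : ℝ) = 1 := by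
    intro i
    rw [real_inner_self_eq_norm_sq, hh i]; norm_num
  -- inner of h i with P i v is z i
  have hPinner : ∀ i v, (inner ℝ (h i) (P i v) : ℝ) = z i := by
    intro i v
    rw [hPdef, inner_sub_right, real_inner_smul_right, hhself]
    ring
  -- the derivative direction is orthogonal to h i
  have hDorth : ∀ i t, (inner ℝ (h i) (∑ j, a i j t • (P i (x t j) - P i (x t i))) : ℝ) = 0 := by
    intro i t
    rw [inner_sum]
    refine Finset.sum_eq_zero fun j _ => ?_
    rw [real_inner_smul_right, inner_sub_right, hPinner, hPinner]
    ring
  -- Part 1: invariance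
  have part1 : ∀ t ≥ (0 : ℝ), ∀ i, (inner ℝ (h i) (x t i) : ℝ) = z i := by
    intro t ht i
    have hder : ∀ u ∈ Set.Ico (0 : ℝ) t,
        HasDerivWithinAt (fun s => (inner ℝ (h i) (x s i) : ℝ)) 0 (Set.Ici u) u := by
      intro u hu
      have := (hasDerivAt_const u (h i)).inner ℝ (hx i u hu.1)
      simp only [inner_zero_left, add_zero, hDorth] at this
      exact this.hasDerivWithinAt
    have hcont : ContinuousOn (fun s => (inner ℝ (h i) (x s i) : ℝ)) (Set.Icc 0 t) := by
      intro u hu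
      have := (hasDerivAt_const u (h i)).inner ℝ (hx i u hu.1)
      exact this.continuousAt.continuousWithinAt
    have := constant_of_has_deriv_right_zero hcont hder t (Set.right_mem_Icc.2 ht)
    simpa [hx0 i] using this
  refine ⟨part1, ?_⟩
  intro s t hs hst
  rcases Nat.eq_zero_or_pos N with hN | hN
  · subst hN
    simp [Real.iSup_of_isEmpty]
  haveI : NeZero N := ⟨hN.ne'⟩
  -- the projection is a contraction around ys
  have hPcontract : ∀ i v, ‖P i v - ys‖ ≤ ‖v - ys‖ := by
    intro i v
    have hc : (inner ℝ (h i) v : ℝ) - z i = (inner ℝ (h i) (v - ys) : ℝ) := by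
      rw [inner_sub_right, hys]
    have hq : P i v - ys = (v - ys) - ((inner ℝ (h i) (v - ys) : ℝ)) • h i := by
      rw [hPdef, hc]; abel
    have hsq : ‖P i v - ys‖ ^ 2 ≤ ‖v - ys‖ ^ 2 := by
      rw [hq, norm_sub_sq_real, real_inner_smul_right, norm_smul, hh i, mul_one,
        real_inner_comm (v - ys) (h i), Real.norm_eq_abs, sq_abs]
      nlinarith [sq_nonneg ((inner ℝ (h i) (v - ys) : ℝ))]
    exact (pow_le_pow_iff_left₀ (norm_nonneg _) (norm_nonneg _) two_ne_zero).1 hsq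
  set V : Fin N → ℝ → ℝ := fun i u => (1 / 2) * ‖x u i - ys‖ ^ 2 with hV
  set W : ℝ → ℝ := fun u => ⨆ i, V i u with hW
  -- derivative of the Lyapunov functions
  set D : Fin N → ℝ → EuclideanSpace ℝ (Fin m) :=
    fun i u => ∑ j, a i j u • (P i (x u j) - P i (x u i)) with hD
  have hVder : ∀ i, ∀ u ≥ (0 : ℝ),
      HasDerivAt (V i) ((inner ℝ (D i u) (x u i - ys) : ℝ)) u := by
    intro i u hu
    have h1 : HasDerivAt (fun s => x s i - ys) (D i u) u := (hx i u hu).sub_const ys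
    have h2 := (h1.inner ℝ h1).const_mul (1 / 2 : ℝ)
    have h3 : (1 / 2 : ℝ) * ((inner ℝ (x u i - ys) (D i u) : ℝ) + (inner ℝ (D i u) (x u i - ys) : ℝ))
        = (inner ℝ (D i u) (x u i - ys) : ℝ) := by
      rw [real_inner_comm (x u i - ys)]; ring
    rw [h3] at h2
    convert h2 using 1
    · rfl
    · rfl
    funext s
    rw [hV]
    simp only [real_inner_self_eq_norm_sq]
  have hVcont : ∀ i, ∀ u ≥ (0 : ℝ), ContinuousAt (V i) u := fun i u hu =>
    (hVder i u hu).continuousAt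
  -- key derivative estimate at points of maximum
  have hkey : ∀ u ≥ (0 : ℝ), ∀ i, (∀ j, ‖x u j - ys‖ ≤ ‖x u i - ys‖) →
      (inner ℝ (D i u) (x u i - ys) : ℝ) ≤ 0 := by
    intro u hu i hmax
    have hPxi : P i (x u i) = x u i := by
      rw [hPdef, part1 u hu i]
      simp
    rw [hD]
    simp only
    rw [sum_inner]
    refine Finset.sum_nonpos fun j _ => ?_
    rw [real_inner_smul_left]
    refine mul_nonpos_of_nonneg_of_nonpos (ha i j u) ?_
    rw [hPxi, inner_sub_left]
    have h1 : (inner ℝ (P i (x u j)) (x u i - ys) : ℝ)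
        = (inner ℝ (P i (x u j) - ys) (x u i - ys) : ℝ) + (inner ℝ ys (x u i - ys) : ℝ) := by
      rw [← inner_add_left]
      congr 1
      abel
    have h2 : (inner ℝ (x u i) (x u i - ys) : ℝ)
        = (inner ℝ (x u i - ys) (x u i - ys) : ℝ) + (inner ℝ ys (x u i - ys) : ℝ) := by
      rw [← inner_add_left]
      congr 1
      abel
    rw [h1, h2]
    have h3 : (inner ℝ (P i (x u j) - ys) (x u i - ys) : ℝ) ≤ ‖x u i - ys‖ * ‖x u i - ys‖ :=
      le_trans (real_inner_le_norm _ _) (by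
        have := hPcontract i (x u j)
        have := hmax j
        nlinarith [norm_nonneg (x u i - ys)])
    rw [real_inner_self_eq_norm_sq]
    nlinarith [h3]
  -- continuity of W
  haveI : Nonempty (Fin N) := ⟨⟨0, hN⟩⟩
  have hWsup' : ∀ u, W u = Finset.univ.sup' Finset.univ_nonempty (fun i => V i u) := by
    intro u
    rw [Finset.sup'_univ_eq_ciSup]
  have hWcont : ∀ u ≥ (0 : ℝ), ContinuousAt W u := by
    intro u hu
    have : ContinuousAt (fun v => Finset.univ.sup' Finset.univ_nonempty (fun i => V i v)) u :=
      ContinuousAt.finset_sup'_apply Finset.univ_nonempty (fun i _ => hVcont i u hu)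
    exact this.congr (by filter_upwards with v using (hWsup' v).symm)
  -- argmax
  have hargmax : ∀ u, ∃ i, (∀ j, V j u ≤ V i u) ∧ W u = V i u := by
    intro u
    obtain ⟨i, hi⟩ := Finite.exists_max (fun j => V j u)
    refine ⟨i, hi, le_antisymm (ciSup_le hi) (le_ciSup (f := fun j => V j u) (Set.Finite.bddAbove (Set.finite_range _)) i)⟩
  -- max dominance transfers to norms
  have hmaxnorm : ∀ u i, (∀ j, V j u ≤ V i u) → ∀ j, ‖x u j - ys‖ ≤ ‖x u i - ys‖ := by
    intro u i hi j
    have := hi j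
    rw [hV] at this
    simp only at this
    nlinarith [norm_nonneg (x u j - ys), norm_nonneg (x u i - ys)]
  -- apply the fencing theorem
  have main : ∀ u ∈ Set.Icc s t, W u ≤ W s := by
    have := image_le_of_liminf_slope_right_le_deriv_boundary
      (f := W) (a := s) (b := t) (B := fun _ => W s) (B' := fun _ => 0)
      (fun u hu => (hWcont u (hs.trans hu.1)).continuousWithinAt)
      le_rfl continuousOn_const (fun u _ => (hasDerivWithinAt_const u _ (W s)))
      ?_
    · exact this
    intro u hu r hr
    have hr' : (0 : ℝ) < r := hr
    have hu0 : (0 : ℝ) ≤ u := hs.trans hu.1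
    -- show the slope is eventually < r
    have hev : ∀ᶠ zz in 𝓝[>] u, slope W u zz < r := by
      obtain ⟨i, hi, hWu⟩ := hargmax u
      have hjev : ∀ j, ∀ᶠ zz in 𝓝[>] u, V j zz < W u + r * (zz - u) := by
        intro j
        rcases eq_or_lt_of_le (hi j) with hje | hje
        · -- j is also an argmax
          have hd : (inner ℝ (D j u) (x u j - ys) : ℝ) ≤ 0 := by
            refine hkey u hu0 j (hmaxnorm u j (fun k => ?_))
            rw [hje]; exact hi k
          have htend := hasDerivAt_iff_tendsto_slope.1 (hVder j u hu0)
          have hlt : ∀ᶠ zz in 𝓝[≠] u, slope (V j) u zz < r :=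
            htend (Iio_mem_nhds (lt_of_le_of_lt hd hr))
          have hlt' : ∀ᶠ zz in 𝓝[>] u, slope (V j) u zz < r :=
            nhdsWithin_mono u (fun zz hzz => ne_of_gt hzz) hlt
          filter_upwards [hlt', self_mem_nhdsWithin] with zz hzz hzu
          have hzu' : (0 : ℝ) < zz - u := sub_pos.2 hzu
          rw [slope_def_field] at hzz
          have h4 := (div_lt_iff₀ hzu').1 hzz
          rw [hWu, ← hje]
          linarith
        · -- V j u < W u : use continuity
          have hc := hVcont j u hu0
          have hlt0 : V j u < W u := by rw [hWu]; exact hje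
          have hev0 : ∀ᶠ zz in 𝓝 u, V j zz < W u :=
            hc.eventually_lt continuousAt_const hlt0
          have h1 : ∀ᶠ zz in 𝓝[>] u, V j zz < W u := nhdsWithin_le_nhds hev0
          filter_upwards [h1, self_mem_nhdsWithin] with zz hzz hzu
          have hpos : (0 : ℝ) < zz - u := sub_pos.2 hzu
          nlinarith [mul_pos hr' hpos]
      have hall : ∀ᶠ zz in 𝓝[>] u, ∀ j, V j zz < W u + r * (zz - u) :=
        Filter.eventually_all.2 hjev
      filter_upwards [hall, self_mem_nhdsWithin] with zz hzz hzu
      have hzu' : (0 : ℝ) < zz - u := sub_pos.2 hzu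
      obtain ⟨k, _, hWz⟩ := hargmax zz
      rw [slope_def_field, div_lt_iff₀ hzu']
      rw [hWz]
      have := hzz k
      linarith
    exact hev.frequently
  have := main t ⟨hst, le_rfl⟩
  exact this
end

section
/- Let V₁, …, V_n : ℝ → ℝ be continuously differentiable and let V(t) = max_{1≤i≤n} Vᵢ(t). Then for each t, the upper Dini derivative of V satisfies D⁺V(t) = max_{i ∈ I(t)} V̇ᵢ(t), where I(t) = {i : V(t) = Vᵢ(t)} is the set of indices attaining the maximum at t. -/
open Filter Set

private lemma tendsto_sup'_aux {ι β : Type*} (A : Finset ι) (hA : A.Nonempty)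
    (f : ι → β → ℝ) (a : ι → ℝ) (l : Filter β)
    (h : ∀ i ∈ A, Tendsto (f i) l (nhds (a i))) :
    Tendsto (fun s => A.sup' hA (fun i => f i s)) l (nhds (A.sup' hA a)) := by
  revert h
  induction hA using Finset.Nonempty.cons_induction with
  | singleton i => intro h; simpa using h i (by simp)
  | cons i A hi hA ih =>
    intro h
    have key : (fun s => (Finset.cons i A hi).sup' (Finset.cons_nonempty hi) fun j => f j s)
        = fun s => max (f i s) (A.sup' hA fun j => f j s) := by
      funext s; rw [Finset.sup'_cons]
    rw [key, Finset.sup'_cons (H := hA)]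
    exact (h i (by simp)).max (ih fun j hj => h j (Finset.mem_cons_of_mem hj))

theorem stmt17 {n : ℕ} (hn : 0 < n) (V V' : Fin n → ℝ → ℝ)
    (hderiv : ∀ i t, HasDerivAt (V i) (V' i t) t)
    (hcont : ∀ i, Continuous (V' i)) (t : ℝ) :
    Filter.limsup (fun s => ((⨆ i, V i (t + s)) - ⨆ i, V i t) / s)
        (nhdsWithin 0 (Set.Ioi 0))
      = sSup {d : ℝ | ∃ i, V i t = (⨆ j, V j t) ∧ d = V' i t} := by
  haveI : Nonempty (Fin n) := ⟨⟨0, hn⟩⟩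
  set M0 : ℝ := ⨆ j, V j t with hM0
  have hbdd : ∀ u : ℝ, BddAbove (Set.range fun i => V i u) :=
    fun u => (Set.finite_range _).bddAbove
  obtain ⟨i0, hi0⟩ := Finite.exists_max (fun i => V i t)
  have hM0eq : M0 = V i0 t := le_antisymm (ciSup_le hi0) (le_ciSup (hbdd t) i0)
  set A : Finset (Fin n) := Finset.univ.filter (fun i => V i t = M0) with hAdef
  have hmemA : ∀ i, i ∈ A ↔ V i t = M0 := by
    intro i; simp [hAdef]
  have hA : A.Nonempty := ⟨i0, (hmemA i0).2 hM0eq.symm⟩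
  set L : ℝ := A.sup' hA (fun i => V' i t) with hL
  -- continuity of each V i
  have hVcont : ∀ i, Continuous (V i) := fun i =>
    continuous_iff_continuousAt.2 fun x => (hderiv i x).continuousAt
  -- g s = sup over active set
  set g : ℝ → ℝ := fun s => A.sup' hA (fun i => V i (t + s)) with hg
  have hg0 : g 0 = M0 := by
    apply le_antisymm
    · exact Finset.sup'_le _ _ fun i hi => by
        rw [add_zero]; exact le_of_eq ((hmemA i).1 hi)
    · calc M0 = V i0 (t + 0) := by rw [add_zero, hM0eq]
        _ ≤ g 0 := Finset.le_sup' (fun i => V i (t + 0)) ((hmemA i0).2 hM0eq.symm)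
  have hgtend : Tendsto g (nhds 0) (nhds M0) := by
    rw [← hg0]
    exact tendsto_sup'_aux A hA _ _ _ fun i _ =>
      ((hVcont i).comp (continuous_const.add continuous_id)).continuousAt
  -- eventually the global sup equals the sup over active set
  have hev : ∀ᶠ s in nhds 0, (⨆ i, V i (t + s)) = g s := by
    have hall : ∀ᶠ s in nhds 0, ∀ i, i ∉ A → V i (t + s) < g s := by
      rw [eventually_all]
      intro i
      by_cases hi : i ∈ A
      · exact Filter.Eventually.of_forall fun s h => absurd hi h
      · have hlt : V i t < M0 := lt_of_le_of_ne (le_ciSup (hbdd t) i)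
          (fun h => hi ((hmemA i).2 h))
        have h1 : Tendsto (fun s => V i (t + s)) (nhds 0) (nhds (V i t)) := by
          have h2 := ((hVcont i).comp (continuous_add_left t)).tendsto 0
          simpa [Function.comp_def] using h2
        exact (h1.eventually_lt hgtend hlt).mono fun s h _ => h
    refine hall.mono fun s hs => le_antisymm ?_ ?_
    · refine ciSup_le fun i => ?_
      by_cases hi : i ∈ A
      · exact Finset.le_sup' (fun i => V i (t + s)) hi
      · exact (hs i hi).le
    · exact Finset.sup'_le _ _ fun i _ => le_ciSup (hbdd (t + s)) i
  -- the difference quotient eventually equals sup' of quotients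
  set Q : ℝ → ℝ := fun s => A.sup' hA (fun i => (V i (t + s) - V i t) / s) with hQ
  have hquot : ∀ᶠ s in nhdsWithin 0 (Set.Ioi 0),
      ((⨆ i, V i (t + s)) - M0) / s = Q s := by
    filter_upwards [nhdsWithin_le_nhds hev, eventually_mem_nhdsWithin] with s hs hspos
    rw [hs, hg]
    have hs0 : (0:ℝ) < s := hspos
    rw [Finset.comp_sup'_eq_sup'_comp hA (g := fun x => (x - M0) / s)
      (fun x y => by
        rw [← max_sub_sub_right, ← max_div_div_right hs0.le])]
    exact Finset.sup'_congr hA rfl fun i hi => by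
      simp only [Function.comp_apply]
      rw [(hmemA i).1 hi]
  -- Q tends to L
  have hQtend : Tendsto Q (nhdsWithin 0 (Set.Ioi 0)) (nhds L) := by
    apply tendsto_sup'_aux
    intro i _
    have hslope := hasDerivAt_iff_tendsto_slope.1 (hderiv i t)
    have hmap : Tendsto (fun s : ℝ => t + s) (nhdsWithin 0 (Set.Ioi 0))
        (nhdsWithin t {t}ᶜ) := by
      rw [tendsto_nhdsWithin_iff]
      constructor
      · have h1 : Tendsto (fun s : ℝ => t + s) (nhds 0) (nhds (t + 0)) :=
          (continuous_const.add continuous_id).tendsto 0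
        rw [add_zero] at h1
        exact h1.mono_left nhdsWithin_le_nhds
      · filter_upwards [eventually_mem_nhdsWithin] with s hs
        have : (0:ℝ) < s := hs
        simp [Set.mem_compl_iff]
        linarith
    have := hslope.comp hmap
    refine this.congr fun s => ?_
    simp [Function.comp, slope_def_field, add_sub_cancel_left]
  have hlimsup : Filter.limsup (fun s => ((⨆ i, V i (t + s)) - M0) / s)
      (nhdsWithin 0 (Set.Ioi 0)) = L := by
    rw [Filter.limsup_congr hquot]
    exact hQtend.limsup_eq
  rw [hlimsup]
  -- sSup of the set equals L
  have hSne : ({d : ℝ | ∃ i, V i t = M0 ∧ d = V' i t}).Nonempty :=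
    ⟨V' i0 t, i0, hM0eq.symm, rfl⟩
  have hSbdd : BddAbove {d : ℝ | ∃ i, V i t = M0 ∧ d = V' i t} := by
    apply Set.Finite.bddAbove
    apply Set.Finite.subset (Set.finite_range fun i => V' i t)
    rintro d ⟨i, _, rfl⟩
    exact ⟨i, rfl⟩
  apply le_antisymm
  · apply Finset.sup'_le
    intro i hi
    exact le_csSup hSbdd ⟨i, (hmemA i).1 hi, rfl⟩
  · apply csSup_le hSne
    rintro d ⟨i, hi, rfl⟩
    exact Finset.le_sup' (fun i => V' i t) ((hmemA i).2 hi)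
end
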